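/- Let a : ℝ × ℝ → ℝ be Lipschitz with constant M (with respect to the sum of absolute values of the two coordinates, scaled by 1/2, i.e. |a(x₁,y₁) - a(x₂,y₂)| ≤ (M/2)(|x₁-x₂| + |y₁-y₂|)) and let κ : ℝ × ℝ → ℝ be Lipschitz with constant K in the same sense. For P ∈ ℕ and x ∈ ℝ^P define the vector field 𝐚(x)_i = a(x_i, (1/P) ∑_{j=1}^P κ(x_i, x_j)). Then for all x, y ∈ ℝ^P, (1/P) ∑_{i=1}^P |𝐚(x)_i − 𝐚(y)_i| ≤ ((M + MK)/2) · (1/P) ∑_{i=1}^P |x_i − y_i|; in particular the Lipschitz constant of 𝐚 with respect to the averaged ℓ¹ norm does not depend on P. -/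

import Mathlib

/-!
Each coordinate of the drift moves by at most `M/2` times the change of the particle plus the
change of its mean-field term `𝔼 j, κ (x i, x j)`. By the Lipschitz bound on `κ`, the latter is at
most `K/2` times the change of the particle plus the averaged change of all particles. Averaging
over `i` turns both contributions into multiples of `𝔼 i, |x i - y i|`, with a constant free of `P`.
-/

open Finset
open scoped BigOperators

noncomputable section

variable {ι : Type*} [Fintype ι]

def particleDrift (a κ : ℝ × ℝ → ℝ) (x : ι → ℝ) (i : ι) : ℝ :=
  a (x i, 𝔼 j, κ (x i, x j))

theorem abs_expect_sub_expect_le [Nonempty ι] {κ : ℝ × ℝ → ℝ} {K : ℝ}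
    (hκ : ∀ x₁ y₁ x₂ y₂ : ℝ, |κ (x₁, y₁) - κ (x₂, y₂)| ≤ K / 2 * (|x₁ - x₂| + |y₁ - y₂|))
    (u v : ℝ) (x y : ι → ℝ) :
    |𝔼 j, κ (u, x j) - 𝔼 j, κ (v, y j)| ≤ K / 2 * (|u - v| + 𝔼 j, |x j - y j|) :=
  calc |𝔼 j, κ (u, x j) - 𝔼 j, κ (v, y j)|
      ≤ 𝔼 j, |κ (u, x j) - κ (v, y j)| := by
        rw [← expect_sub_distrib]; exact abs_expect_le _ _
    _ ≤ 𝔼 j, K / 2 * (|u - v| + |x j - y j|) := expect_le_expect fun j _ => hκ _ _ _ _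
    _ = K / 2 * (|u - v| + 𝔼 j, |x j - y j|) := by
        rw [← mul_expect, expect_add_distrib, Fintype.expect_const]

theorem abs_particleDrift_sub_le {a κ : ℝ × ℝ → ℝ} {M K : ℝ} (hM : 0 ≤ M)
    (ha : ∀ x₁ y₁ x₂ y₂ : ℝ, |a (x₁, y₁) - a (x₂, y₂)| ≤ M / 2 * (|x₁ - x₂| + |y₁ - y₂|))
    (hκ : ∀ x₁ y₁ x₂ y₂ : ℝ, |κ (x₁, y₁) - κ (x₂, y₂)| ≤ K / 2 * (|x₁ - x₂| + |y₁ - y₂|))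
    (x y : ι → ℝ) (i : ι) :
    |particleDrift a κ x i - particleDrift a κ y i|
      ≤ M / 2 * (|x i - y i| + K / 2 * (|x i - y i| + 𝔼 j, |x j - y j|)) := by
  have : Nonempty ι := ⟨i⟩
  calc |particleDrift a κ x i - particleDrift a κ y i|
      ≤ M / 2 * (|x i - y i| + |𝔼 j, κ (x i, x j) - 𝔼 j, κ (y i, y j)|) := ha _ _ _ _
    _ ≤ M / 2 * (|x i - y i| + K / 2 * (|x i - y i| + 𝔼 j, |x j - y j|)) := by
        gcongr; exact abs_expect_sub_expect_le hκ _ _ x y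

theorem expect_abs_particleDrift_sub_le {a κ : ℝ × ℝ → ℝ} {M K : ℝ} (hM : 0 ≤ M)
    (ha : ∀ x₁ y₁ x₂ y₂ : ℝ, |a (x₁, y₁) - a (x₂, y₂)| ≤ M / 2 * (|x₁ - x₂| + |y₁ - y₂|))
    (hκ : ∀ x₁ y₁ x₂ y₂ : ℝ, |κ (x₁, y₁) - κ (x₂, y₂)| ≤ K / 2 * (|x₁ - x₂| + |y₁ - y₂|))
    (x y : ι → ℝ) :
    𝔼 i, |particleDrift a κ x i - particleDrift a κ y i|
      ≤ (M + M * K) / 2 * 𝔼 i, |x i - y i| := by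
  rcases isEmpty_or_nonempty ι with hι | hι
  · simp
  set D := 𝔼 j, |x j - y j|
  calc 𝔼 i, |particleDrift a κ x i - particleDrift a κ y i|
      ≤ 𝔼 i, M / 2 * (|x i - y i| + K / 2 * (|x i - y i| + D)) :=
        expect_le_expect fun i _ => abs_particleDrift_sub_le hM ha hκ x y i
    _ = M / 2 * (D + K / 2 * (D + D)) := by
        rw [← mul_expect, expect_add_distrib, ← mul_expect, expect_add_distrib,
          Fintype.expect_const]
    _ = (M + M * K) / 2 * D := by ring

theorem one_div_card_mul_sum_eq_expect {P : ℕ} (f : Fin P → ℝ) :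
    1 / (P : ℝ) * ∑ i, f i = 𝔼 i, f i := by
  rw [Fintype.expect_eq_sum_div_card, Fintype.card_fin, one_div_mul_eq_div]

end

theorem particle_drift_avg_lipschitz_general
    (a κ : ℝ × ℝ → ℝ) (M K : ℝ) (hM : 0 ≤ M)
    (ha : ∀ x₁ y₁ x₂ y₂ : ℝ, |a (x₁, y₁) - a (x₂, y₂)| ≤ M / 2 * (|x₁ - x₂| + |y₁ - y₂|))
    (hκ : ∀ x₁ y₁ x₂ y₂ : ℝ, |κ (x₁, y₁) - κ (x₂, y₂)| ≤ K / 2 * (|x₁ - x₂| + |y₁ - y₂|))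
    (P : ℕ) (x y : Fin P → ℝ) :
    (1 / (P : ℝ)) * ∑ i, |a (x i, (1 / (P : ℝ)) * ∑ j, κ (x i, x j))
                        - a (y i, (1 / (P : ℝ)) * ∑ j, κ (y i, y j))|
      ≤ (M + M * K) / 2 * ((1 / (P : ℝ)) * ∑ i, |x i - y i|) := by
  simpa only [one_div_card_mul_sum_eq_expect, particleDrift]
    using expect_abs_particleDrift_sub_le hM ha hκ x y

/-- P-uniform average Lipschitz bound for the interacting-particle drift. -/
theorem particle_drift_avg_lipschitz
    (a κ : ℝ × ℝ → ℝ) (M K : ℝ) (hM : 0 ≤ M) (hK : 0 ≤ K)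
    (ha : ∀ x₁ y₁ x₂ y₂ : ℝ, |a (x₁, y₁) - a (x₂, y₂)| ≤ M / 2 * (|x₁ - x₂| + |y₁ - y₂|))
    (hκ : ∀ x₁ y₁ x₂ y₂ : ℝ, |κ (x₁, y₁) - κ (x₂, y₂)| ≤ K / 2 * (|x₁ - x₂| + |y₁ - y₂|))
    (P : ℕ) (hP : 0 < P) (x y : Fin P → ℝ) :
    (1 / (P : ℝ)) * ∑ i, |a (x i, (1 / (P : ℝ)) * ∑ j, κ (x i, x j))
                        - a (y i, (1 / (P : ℝ)) * ∑ j, κ (y i, y j))|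
      ≤ (M + M * K) / 2 * ((1 / (P : ℝ)) * ∑ i, |x i - y i|) :=
  particle_drift_avg_lipschitz_general a κ M K hM ha hκ P x y
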